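/- Set a = (1−r)·ħ₀·B₀/(r·θ₀·B₀−ħ₀), b = ħ₀·((r+s−r·s)·θ₀·B₀−ħ₀)/(r·θ₀·B₀−ħ₀), c = r·B₀, and d = ħ₀ + r·(s−1)·θ₀·B₀, and assume b ≠ 0, d ≠ 0, c/b > 0, and a/d > 0. Then the Gaussian ψ₀(x,y) = exp(−(c/(2b))·x² − (a/(2d))·y²) is a Schwartz function on ℝ², and it satisfies the first-order partial differential equation a·y·ψ₀(x,y) + i·b·(∂ψ₀/∂x)(x,y) + i·c·x·ψ₀(x,y) + d·(∂ψ₀/∂y)(x,y) = 0 at every point (x,y) ∈ ℝ². -/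

import Mathlib

open MeasureTheory Complex
open scoped ENNReal

noncomputable section

/-- The Gaussian `ψ₀(x,y) = exp(−(c/(2b))x² − (a/(2d))y²)`. -/
def gauss (a b c d : ℝ) : ℝ × ℝ → ℂ := fun p =>
  Complex.exp (-(c / (2 * b)) * p.1 ^ 2 - (a / (2 * d)) * p.2 ^ 2)

/-!
`ψ₀` factors as `e^{-αx²} e^{-βy²}` with `α = c/(2b)` and `β = a/(2d)` of positive real part.
The `n`-th derivative of `e^{-αx²}` is a polynomial times `e^{-αx²}`, and polynomials are
dominated by the Gaussian because `(x²)ᵐ ≤ m! e^{βx²} / βᵐ`; so each factor is a Schwartz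
function of one variable, and by the Leibniz rule so is their product in separate variables.
The PDE splits into two cancelling pairs: `b ∂ₓψ₀ = -c x ψ₀` and `d ∂ᵧψ₀ = -a y ψ₀`.
-/

open scoped SchwartzMap Nat

theorem ContinuousLinearMap.norm_iteratedFDeriv_comp_right_le {𝕜 E F G : Type*}
    [NontriviallyNormedField 𝕜] [NormedAddCommGroup E] [NormedSpace 𝕜 E]
    [NormedAddCommGroup F] [NormedSpace 𝕜 F] [NormedAddCommGroup G] [NormedSpace 𝕜 G]
    (L : G →L[𝕜] E) {f : E → F} {N : WithTop ℕ∞} (hf : ContDiff 𝕜 N f) (x : G) {n : ℕ}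
    (hn : n ≤ N) :
    ‖iteratedFDeriv 𝕜 n (f ∘ L) x‖ ≤ ‖iteratedFDeriv 𝕜 n f (L x)‖ * ‖L‖ ^ n := by
  rw [L.iteratedFDeriv_comp_right hf x hn]
  simpa using (iteratedFDeriv 𝕜 n f (L x)).norm_compContinuousLinearMap_le fun _ => L

theorem Prod.norm_pow_le_add {E F : Type*} [SeminormedAddCommGroup E] [SeminormedAddCommGroup F]
    (p : E × F) (k : ℕ) : ‖p‖ ^ k ≤ ‖p.1‖ ^ k + ‖p.2‖ ^ k := by
  rw [Prod.norm_def]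
  rcases le_total ‖p.1‖ ‖p.2‖ with h | h
  · rw [max_eq_right h]; exact le_add_of_nonneg_left (by positivity)
  · rw [max_eq_left h]; exact le_add_of_nonneg_right (by positivity)

namespace SchwartzMap

variable {E F G A : Type*} [NormedAddCommGroup E] [NormedSpace ℝ E]
  [NormedAddCommGroup F] [NormedSpace ℝ F] [NormedAddCommGroup G] [NormedSpace ℝ G]

theorem norm_iteratedFDeriv_comp_fst_le (f : 𝓢(E, G)) (n : ℕ) (p : E × F) :
    ‖iteratedFDeriv ℝ n (fun q : E × F => f q.1) p‖ ≤ ‖iteratedFDeriv ℝ n f p.1‖ :=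
  ((ContinuousLinearMap.fst ℝ E F).norm_iteratedFDeriv_comp_right_le (f.smooth ⊤) p
    (by exact_mod_cast le_top)).trans <|
    mul_le_of_le_one_right (norm_nonneg _)
      (pow_le_one₀ (norm_nonneg _) (ContinuousLinearMap.norm_fst_le ..))

theorem norm_iteratedFDeriv_comp_snd_le (f : 𝓢(F, G)) (n : ℕ) (p : E × F) :
    ‖iteratedFDeriv ℝ n (fun q : E × F => f q.2) p‖ ≤ ‖iteratedFDeriv ℝ n f p.2‖ :=
  ((ContinuousLinearMap.snd ℝ E F).norm_iteratedFDeriv_comp_right_le (f.smooth ⊤) p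
    (by exact_mod_cast le_top)).trans <|
    mul_le_of_le_one_right (norm_nonneg _)
      (pow_le_one₀ (norm_nonneg _) (ContinuousLinearMap.norm_snd_le ..))

variable [NormedRing A] [NormedAlgebra ℝ A]

def prodMul (f : 𝓢(E, A)) (g : 𝓢(F, A)) : 𝓢(E × F, A) where
  toFun p := f p.1 * g p.2
  smooth' := ((f.smooth ⊤).comp contDiff_fst).mul ((g.smooth ⊤).comp contDiff_snd)
  decay' k n := by
    refine ⟨∑ i ∈ Finset.range (n + 1), (n.choose i : ℝ) *
      (SchwartzMap.seminorm ℝ k i f * SchwartzMap.seminorm ℝ 0 (n - i) g +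
        SchwartzMap.seminorm ℝ 0 i f * SchwartzMap.seminorm ℝ k (n - i) g),
      fun p => ?_⟩
    calc ‖p‖ ^ k * ‖iteratedFDeriv ℝ n (fun q : E × F => f q.1 * g q.2) p‖
        ≤ (‖p.1‖ ^ k + ‖p.2‖ ^ k) * ∑ i ∈ Finset.range (n + 1), (n.choose i : ℝ) *
            ‖iteratedFDeriv ℝ i (fun q : E × F => f q.1) p‖ *
            ‖iteratedFDeriv ℝ (n - i) (fun q : E × F => g q.2) p‖ :=
          mul_le_mul (p.norm_pow_le_add k)
            (norm_iteratedFDeriv_mul_le ((f.smooth ⊤).comp contDiff_fst)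
              ((g.smooth ⊤).comp contDiff_snd) p (by exact_mod_cast le_top))
            (norm_nonneg _) (by positivity)
      _ ≤ (‖p.1‖ ^ k + ‖p.2‖ ^ k) * ∑ i ∈ Finset.range (n + 1), (n.choose i : ℝ) *
            ‖iteratedFDeriv ℝ i f p.1‖ * ‖iteratedFDeriv ℝ (n - i) g p.2‖ := by
          gcongr with i
          exacts [norm_iteratedFDeriv_comp_fst_le f i p, norm_iteratedFDeriv_comp_snd_le g _ p]
      _ = ∑ i ∈ Finset.range (n + 1), (n.choose i : ℝ) *
            ((‖p.1‖ ^ k * ‖iteratedFDeriv ℝ i f p.1‖) * ‖iteratedFDeriv ℝ (n - i) g p.2‖ +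
              ‖iteratedFDeriv ℝ i f p.1‖ * (‖p.2‖ ^ k * ‖iteratedFDeriv ℝ (n - i) g p.2‖)) := by
          rw [Finset.mul_sum]
          exact Finset.sum_congr rfl fun _ _ => by ring
      _ ≤ _ := by
          gcongr
          · exact le_seminorm ℝ k _ f p.1
          · exact norm_iteratedFDeriv_le_seminorm ℝ g _ p.2
          · exact norm_iteratedFDeriv_le_seminorm ℝ f _ p.1
          · exact le_seminorm ℝ k _ g p.2

end SchwartzMap

def cgaussian (α : ℂ) (x : ℝ) : ℂ :=
  cexp (-α * x ^ 2)

theorem hasDerivAt_cgaussian (α : ℂ) (x : ℝ) :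
    HasDerivAt (cgaussian α) (-2 * α * x * cgaussian α x) x := by
  have h : HasDerivAt (fun y : ℝ => -α * (y : ℂ) ^ 2) (-α * (2 * x)) x := by
    simpa using ((hasDerivAt_pow 2 (x : ℂ)).const_mul (-α)).comp_ofReal
  convert h.cexp using 1
  · rfl
  · rw [cgaussian]
    ring

theorem contDiff_cgaussian (α : ℂ) : ContDiff ℝ ⊤ (cgaussian α) :=
  contDiff_exp.comp (contDiff_const.mul (ofRealCLM.contDiff.pow 2))

theorem norm_cgaussian (α : ℂ) (x : ℝ) : ‖cgaussian α x‖ = Real.exp (-α.re * x ^ 2) := by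
  simp [cgaussian, Complex.norm_exp, ← ofReal_pow]

theorem exists_iteratedDeriv_cgaussian_eq (α : ℂ) (n : ℕ) :
    ∃ P : Polynomial ℂ,
      iteratedDeriv n (cgaussian α) = fun x : ℝ => P.eval (x : ℂ) * cgaussian α x := by
  induction n with
  | zero => exact ⟨1, by simp⟩
  | succ n ih =>
    obtain ⟨P, hP⟩ := ih
    refine ⟨P.derivative - 2 * Polynomial.C α * Polynomial.X * P, funext fun x => ?_⟩
    have hPx : HasDerivAt (fun y : ℝ => P.eval (y : ℂ)) (P.derivative.eval (x : ℂ)) x :=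
      (P.hasDerivAt (x : ℂ)).comp_ofReal
    rw [iteratedDeriv_succ, hP, (hPx.fun_mul (hasDerivAt_cgaussian α x)).deriv]
    simp only [Polynomial.eval_sub, Polynomial.eval_mul, Polynomial.eval_ofNat,
      Polynomial.eval_C, Polynomial.eval_X]
    ring

theorem abs_pow_mul_exp_neg_mul_sq_le {β : ℝ} (hβ : 0 < β) (m : ℕ) (x : ℝ) :
    |x| ^ m * Real.exp (-β * x ^ 2) ≤ 1 + m ! / β ^ m := by
  have hexp : Real.exp (-β * x ^ 2) ≤ 1 := Real.exp_le_one_iff.mpr (by nlinarith [sq_nonneg x])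
  -- `(βx²)ᵐ / m! ≤ e^{βx²}` is a single term of the exponential series.
  have hsq : (x ^ 2) ^ m * Real.exp (-β * x ^ 2) ≤ m ! / β ^ m := by
    have h := Real.pow_div_factorial_le_exp (β * x ^ 2) (by positivity) m
    rw [div_le_iff₀ (by positivity), mul_pow] at h
    rw [le_div_iff₀ (by positivity), neg_mul, Real.exp_neg]
    calc (x ^ 2) ^ m * (Real.exp (β * x ^ 2))⁻¹ * β ^ m
        = β ^ m * (x ^ 2) ^ m * (Real.exp (β * x ^ 2))⁻¹ := by ring
      _ ≤ Real.exp (β * x ^ 2) * m ! * (Real.exp (β * x ^ 2))⁻¹ := by gcongr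
      _ = m ! := by field_simp
  have hpow : |x| ^ m ≤ 1 + (x ^ 2) ^ m := by
    have : (x ^ 2) ^ m = (|x| ^ m) ^ 2 := by rw [← sq_abs, ← pow_mul, ← pow_mul, mul_comm]
    nlinarith [sq_nonneg (|x| ^ m - 1)]
  calc |x| ^ m * Real.exp (-β * x ^ 2)
      ≤ (1 + (x ^ 2) ^ m) * Real.exp (-β * x ^ 2) := by gcongr
    _ = Real.exp (-β * x ^ 2) + (x ^ 2) ^ m * Real.exp (-β * x ^ 2) := by ring
    _ ≤ 1 + m ! / β ^ m := add_le_add hexp hsq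

theorem Polynomial.exists_norm_eval_mul_cgaussian_le {α : ℂ} (hα : 0 < α.re) (P : Polynomial ℂ) :
    ∃ C, ∀ x : ℝ, ‖P.eval (x : ℂ) * cgaussian α x‖ ≤ C := by
  induction P using Polynomial.induction_on' with
  | add P Q hP hQ =>
    obtain ⟨C₁, hC₁⟩ := hP
    obtain ⟨C₂, hC₂⟩ := hQ
    refine ⟨C₁ + C₂, fun x => ?_⟩
    rw [Polynomial.eval_add, add_mul]
    exact (norm_add_le _ _).trans (add_le_add (hC₁ x) (hC₂ x))
  | monomial m a =>
    refine ⟨‖a‖ * (1 + m ! / α.re ^ m), fun x => ?_⟩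
    rw [Polynomial.eval_monomial, norm_mul, norm_mul, norm_pow, norm_real, Real.norm_eq_abs,
      norm_cgaussian, mul_assoc]
    gcongr
    exact abs_pow_mul_exp_neg_mul_sq_le hα m x

def cgaussianSchwartz {α : ℂ} (hα : 0 < α.re) : 𝓢(ℝ, ℂ) where
  toFun := cgaussian α
  smooth' := (contDiff_cgaussian α).of_le le_top
  decay' k n := by
    obtain ⟨P, hP⟩ := exists_iteratedDeriv_cgaussian_eq α n
    obtain ⟨C, hC⟩ := (Polynomial.X ^ k * P).exists_norm_eval_mul_cgaussian_le hα
    refine ⟨C, fun x => ?_⟩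
    calc ‖x‖ ^ k * ‖iteratedFDeriv ℝ n (cgaussian α) x‖
        = ‖(Polynomial.X ^ k * P).eval (x : ℂ) * cgaussian α x‖ := by
          simp [norm_iteratedFDeriv_eq_norm_iteratedDeriv, hP, mul_assoc]
      _ ≤ C := hC x

theorem fderiv_apply_one_zero {F : Type*} [NormedAddCommGroup F] [NormedSpace ℝ F]
    {f : ℝ × ℝ → F} {p : ℝ × ℝ} (hf : DifferentiableAt ℝ f p) :
    fderiv ℝ f p (1, 0) = deriv (fun x => f (x, p.2)) p.1 :=
  (hf.hasFDerivAt.comp_hasDerivAt p.1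
    ((hasDerivAt_id p.1).prodMk (hasDerivAt_const _ _))).deriv.symm

theorem fderiv_apply_zero_one {F : Type*} [NormedAddCommGroup F] [NormedSpace ℝ F]
    {f : ℝ × ℝ → F} {p : ℝ × ℝ} (hf : DifferentiableAt ℝ f p) :
    fderiv ℝ f p (0, 1) = deriv (fun y => f (p.1, y)) p.2 :=
  (hf.hasFDerivAt.comp_hasDerivAt p.2
    ((hasDerivAt_const _ _).prodMk (hasDerivAt_id p.2))).deriv.symm

theorem gauss_eq_mul (a b c d : ℝ) :
    gauss a b c d = fun p => cgaussian (c / (2 * b)) p.1 * cgaussian (a / (2 * d)) p.2 := by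
  funext p
  rw [gauss, cgaussian, cgaussian, ← Complex.exp_add]
  ring_nf

theorem differentiable_gauss (a b c d : ℝ) : Differentiable ℝ (gauss a b c d) := by
  rw [gauss_eq_mul]
  exact (((contDiff_cgaussian _).comp contDiff_fst).mul
    ((contDiff_cgaussian _).comp contDiff_snd)).differentiable (by simp)

theorem fderiv_gauss_apply_one_zero (a b c d : ℝ) (p : ℝ × ℝ) :
    fderiv ℝ (gauss a b c d) p (1, 0) = -(c / b) * p.1 * gauss a b c d p := by
  rw [fderiv_apply_one_zero (differentiable_gauss a b c d p)]
  simp only [gauss_eq_mul]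
  rw [((hasDerivAt_cgaussian _ p.1).mul_const _).deriv]
  ring

theorem fderiv_gauss_apply_zero_one (a b c d : ℝ) (p : ℝ × ℝ) :
    fderiv ℝ (gauss a b c d) p (0, 1) = -(a / d) * p.2 * gauss a b c d p := by
  rw [fderiv_apply_zero_one (differentiable_gauss a b c d p)]
  simp only [gauss_eq_mul]
  rw [((hasDerivAt_cgaussian _ p.2).const_mul _).deriv]
  ring

theorem stmt12_general (a b c d : ℝ) (hcb : 0 < c / b) (had : 0 < a / d) :
    -- ψ₀ is a Schwartz function on ℝ²
    (∃ g : SchwartzMap (ℝ × ℝ) ℂ, ⇑g = gauss a b c d) ∧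
    -- ψ₀ satisfies the first-order PDE
    (∀ p : ℝ × ℝ,
      a * p.2 * gauss a b c d p
        + Complex.I * b * fderiv ℝ (gauss a b c d) p (1, 0)
        + Complex.I * c * p.1 * gauss a b c d p
        + d * fderiv ℝ (gauss a b c d) p (0, 1) = 0) := by
  have hα : 0 < (c / (2 * b) : ℂ).re := by
    rw [show (c / (2 * b) : ℂ) = ((c / b / 2 : ℝ) : ℂ) by push_cast; ring, ofReal_re]
    exact half_pos hcb
  have hβ : 0 < (a / (2 * d) : ℂ).re := by
    rw [show (a / (2 * d) : ℂ) = ((a / d / 2 : ℝ) : ℂ) by push_cast; ring, ofReal_re]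
    exact half_pos had
  refine ⟨⟨(cgaussianSchwartz hα).prodMul (cgaussianSchwartz hβ),
    (gauss_eq_mul a b c d).symm⟩, fun p => ?_⟩
  have hb : (b : ℂ) ≠ 0 := ofReal_ne_zero.mpr (div_ne_zero_iff.mp hcb.ne').2
  have hd : (d : ℂ) ≠ 0 := ofReal_ne_zero.mpr (div_ne_zero_iff.mp had.ne').2
  rw [fderiv_gauss_apply_one_zero, fderiv_gauss_apply_zero_one]
  field_simp
  ring

theorem stmt12 (hb th B r s : ℝ) (hhb : hb ≠ 0) (hth : th ≠ 0) (hB : B ≠ 0)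
    (hnd : hb - th * B ≠ 0) (hrs : r * th * B ≠ hb)
    (a b c d : ℝ)
    (ha : a = (1 - r) * hb * B / (r * th * B - hb))
    (hbdef : b = hb * ((r + s - r * s) * th * B - hb) / (r * th * B - hb))
    (hc : c = r * B)
    (hd : d = hb + r * (s - 1) * th * B)
    (hb0 : b ≠ 0) (hd0 : d ≠ 0) (hcb : 0 < c / b) (had : 0 < a / d) :
    -- ψ₀ is a Schwartz function on ℝ²
    (∃ g : SchwartzMap (ℝ × ℝ) ℂ, ⇑g = gauss a b c d) ∧
    -- ψ₀ satisfies the first-order PDE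
    (∀ p : ℝ × ℝ,
      a * p.2 * gauss a b c d p
        + Complex.I * b * fderiv ℝ (gauss a b c d) p (1, 0)
        + Complex.I * c * p.1 * gauss a b c d p
        + d * fderiv ℝ (gauss a b c d) p (0, 1) = 0) :=
  stmt12_general a b c d hcb had
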